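/- There is no deterministic labelled transition system over the label set {a, b} with a state s₀ such that the set of label sequences of infinite transition sequences from s₀ equals the set of infinite words over {a, b} in which both a and b occur infinitely often. -/
import Mathlib


/-- There is no deterministic labelled transition system over the two-letter
label set `Bool` with a state `s₀` such that the label sequences of infinite
transition sequences from `s₀` are exactly the infinite words in which both
letters occur infinitely often. -/
theorem no_deterministic_lts_for_infinitely_often :
    ¬ ∃ (S : Type) (Tr : S → Bool → S → Prop) (s₀ : S),
        (∀ s l t t', Tr s l t → Tr s l t' → t = t') ∧
        (∀ lab : ℕ → Bool,
          (∃ st : ℕ → S, st 0 = s₀ ∧ ∀ i : ℕ, Tr (st i) (lab i) (st (i + 1))) ↔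
            ((∀ n, ∃ m ≥ n, lab m = false) ∧ (∀ n, ∃ m ≥ n, lab m = true))) := by
  rintro ⟨S, Tr, s₀, hdet, hiff⟩
  -- the word with `n` trues followed by alternation
  set w : ℕ → ℕ → Bool := fun n i => if i < n then true else decide (i % 2 = 0) with hw_def
  have hw : ∀ n, ∃ st : ℕ → S, st 0 = s₀ ∧ ∀ i, Tr (st i) (w n i) (st (i + 1)) := by
    intro n
    apply (hiff (w n)).mpr
    constructor
    · intro k
      refine ⟨2 * max k n + 1, by omega, ?_⟩
      simp only [hw_def]
      rw [if_neg (by omega)]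
      simp only [decide_eq_false_iff_not]
      omega
    · intro k
      refine ⟨2 * max k n, by omega, ?_⟩
      simp only [hw_def]
      by_cases h : 2 * max k n < n
      · rw [if_pos h]
      · rw [if_neg h]
        simp only [decide_eq_true_eq]
        omega
  choose st h0 hstep using hw
  have agree : ∀ i n m, i ≤ n → i ≤ m → st n i = st m i := by
    intro i
    induction i with
    | zero => intro n m _ _; rw [h0, h0]
    | succ i ih =>
      intro n m hn hm
      have e := ih n m (by omega) (by omega)
      have t1 := hstep n i
      have t2 := hstep m i
      have l1 : w n i = true := by simp only [hw_def]; rw [if_pos (by omega)]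
      have l2 : w m i = true := by simp only [hw_def]; rw [if_pos (by omega)]
      rw [l1] at t1; rw [l2, ← e] at t2
      exact hdet _ _ _ _ t1 t2
  have hrun : ∃ st' : ℕ → S, st' 0 = s₀ ∧
      ∀ i : ℕ, Tr (st' i) ((fun _ => true) i) (st' (i + 1)) := by
    refine ⟨fun i => st (i + 1) i, h0 _, ?_⟩
    intro i
    have h := hstep (i + 2) i
    have lw : w (i + 2) i = true := by simp only [hw_def]; rw [if_pos (by omega)]
    rw [lw] at h
    have e1 : st (i + 1) i = st (i + 2) i := agree _ _ _ (by omega) (by omega)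
    simpa [e1] using h
  obtain ⟨hfalse, -⟩ := (hiff (fun _ => true)).mp hrun
  obtain ⟨m, -, hm⟩ := hfalse 0
  simp at hm
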